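/- arXiv:1702.01588 — 3 statements merged into one kernel-verified Lean document; each statement's English description precedes it below -/
import Mathlib

section
/- Let S and T be Cu-semigroups, let φ : S → T be a generalized Cu-morphism (a monoid map preserving order, zero, and suprema of increasing sequences), and let a ∈ S be soft. Then φ(a) is soft in T. -/
/-! If `b' ≪ φ a`, write `a` as the supremum of a rapidly increasing sequence `aₙ`. Since `φ`
preserves that supremum, `b' ≤ φ aₖ` for some `k`, and `aₖ ≪ a`. Softness of `a` gives
`(n+1)·aₖ ≤ n·a`; applying `φ` yields `(n+1)·b' ≤ (n+1)·φ aₖ ≤ n·φ a`. -/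

/-- The sequential way-below (compact containment) relation in a preordered set. -/
def CuWayBelow {S : Type*} [Preorder S] (x y : S) : Prop :=
  ∀ z : ℕ → S, Monotone z → ∀ s : S, IsLUB (Set.range z) s → y ≤ s → ∃ k, x ≤ z k

/-- An abstract Cuntz semigroup: a positively ordered monoid satisfying (O1)-(O4). -/
class IsCuSgp (S : Type*) [AddCommMonoid S] [PartialOrder S] : Prop where
  zero_le : ∀ a : S, 0 ≤ a
  add_mono : ∀ ⦃a b c d : S⦄, a ≤ b → c ≤ d → a + c ≤ b + d
  O1 : ∀ z : ℕ → S, Monotone z → ∃ s, IsLUB (Set.range z) s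
  O2 : ∀ a : S, ∃ z : ℕ → S, (∀ n, CuWayBelow (z n) (z (n + 1))) ∧ IsLUB (Set.range z) a
  O3 : ∀ ⦃a' a b' b : S⦄, CuWayBelow a' a → CuWayBelow b' b → CuWayBelow (a' + b') (a + b)
  O4 : ∀ z w : ℕ → S, Monotone z → Monotone w → ∀ s t : S, IsLUB (Set.range z) s →
    IsLUB (Set.range w) t → IsLUB (Set.range fun n => z n + w n) (s + t)


/-- Generalized Cu-morphism: preserves addition, order, zero and suprema of
increasing sequences. -/
def IsGenCuMor {S T : Type*} [AddCommMonoid S] [PartialOrder S] [AddCommMonoid T]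
    [PartialOrder T] (φ : S → T) : Prop :=
  φ 0 = 0 ∧ (∀ a b : S, φ (a + b) = φ a + φ b) ∧ Monotone φ ∧
    ∀ z : ℕ → S, Monotone z → ∀ s : S, IsLUB (Set.range z) s →
      IsLUB (Set.range (φ ∘ z)) (φ s)

/-- An element `a` is soft if every `a' ≪ a` satisfies `(k+1)·a' ≤ k·a` for some `k`. -/
def IsSoft {S : Type*} [AddCommMonoid S] [PartialOrder S] (a : S) : Prop :=
  ∀ a' : S, CuWayBelow a' a → ∃ k : ℕ, (k + 1) • a' ≤ k • a

section WayBelow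

variable {S : Type*} [Preorder S] {x y y' : S}

theorem CuWayBelow.le (h : CuWayBelow x y) : x ≤ y :=
  h (fun _ => y) monotone_const y (by simp) le_rfl |>.choose_spec

theorem CuWayBelow.trans_le (h : CuWayBelow x y) (h' : y ≤ y') : CuWayBelow x y' :=
  fun z hz s hs hle => h z hz s hs (h'.trans hle)

end WayBelow

theorem IsCuSgp.nsmul_le_nsmul {S : Type*} [AddCommMonoid S] [PartialOrder S] [IsCuSgp S]
    {x y : S} (h : x ≤ y) (n : ℕ) : n • x ≤ n • y := by
  induction n with
  | zero => simp
  | succ n ih => simpa only [succ_nsmul] using IsCuSgp.add_mono ih h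

theorem IsCuSgp.exists_wayBelow_seq_isLUB {S : Type*} [AddCommMonoid S] [PartialOrder S]
    [IsCuSgp S] (a : S) :
    ∃ z : ℕ → S, Monotone z ∧ (∀ n, CuWayBelow (z n) a) ∧ IsLUB (Set.range z) a := by
  obtain ⟨z, hz, hlub⟩ := IsCuSgp.O2 a
  exact ⟨z, monotone_nat_of_le_succ fun n => (hz n).le,
    fun n => (hz n).trans_le (hlub.1 ⟨n + 1, rfl⟩), hlub⟩

namespace IsGenCuMor

variable {S T : Type*} [AddCommMonoid S] [PartialOrder S] [AddCommMonoid T] [PartialOrder T]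
  {φ : S → T}

theorem map_nsmul (hφ : IsGenCuMor φ) (n : ℕ) (x : S) : φ (n • x) = n • φ x := by
  induction n with
  | zero => simpa using hφ.1
  | succ n ih => rw [succ_nsmul, succ_nsmul, hφ.2.1, ih]

theorem exists_wayBelow_le_map [IsCuSgp S] (hφ : IsGenCuMor φ) {a : S} {b : T}
    (hb : CuWayBelow b (φ a)) : ∃ a', CuWayBelow a' a ∧ b ≤ φ a' := by
  obtain ⟨z, hmono, hz, hlub⟩ := IsCuSgp.exists_wayBelow_seq_isLUB a
  obtain ⟨k, hk⟩ := hb (φ ∘ z) (hφ.2.2.1.comp hmono) (φ a) (hφ.2.2.2 z hmono a hlub) le_rfl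
  exact ⟨z k, hz k, hk⟩

theorem isSoft_map [IsCuSgp S] [IsCuSgp T] (hφ : IsGenCuMor φ) {a : S} (ha : IsSoft a) :
    IsSoft (φ a) := by
  intro b hb
  obtain ⟨a', ha', hba'⟩ := hφ.exists_wayBelow_le_map hb
  obtain ⟨n, hn⟩ := ha a' ha'
  refine ⟨n, ?_⟩
  calc (n + 1) • b ≤ (n + 1) • φ a' := IsCuSgp.nsmul_le_nsmul hba' _
    _ = φ ((n + 1) • a') := (hφ.map_nsmul _ _).symm
    _ ≤ φ (n • a) := hφ.2.2.1 hn
    _ = n • φ a := hφ.map_nsmul _ _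

end IsGenCuMor

/-- A generalized Cu-morphism between Cu-semigroups maps soft elements to soft
elements. -/
theorem stmt4 {S T : Type*} [AddCommMonoid S] [PartialOrder S] [AddCommMonoid T]
    [PartialOrder T] [IsCuSgp S] [IsCuSgp T] (φ : S → T) (hφ : IsGenCuMor φ)
    (a : S) (ha : IsSoft a) : IsSoft (φ a) :=
  hφ.isSoft_map ha
end

section
/- Let S be a P-semigroup and let f', f be paths in S indexed by (0,1) ∩ ℚ. Then [f'] ≪ [f] in τ(S) if and only if there exists μ ∈ (0,1) ∩ ℚ such that f'(λ) ≺ f(μ) for all λ ∈ (0,1) ∩ ℚ. -/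
/-- The rationals in the open interval `(0,1)`, used as index set for paths. -/
abbrev Iq : Type := {q : ℚ // 0 < q ∧ q < 1}

lemma Iq.exists_gt (l : Iq) : ∃ m : Iq, l.1 < m.1 := by
  obtain ⟨h0, h1⟩ := l.2
  exact ⟨⟨(l.1 + 1) / 2, by constructor <;> linarith⟩, by show l.1 < (l.1 + 1) / 2; linarith⟩

/-- A `P`-semigroup: a commutative monoid with an additive transitive relation. -/
structure PSgp (M : Type*) [AddCommMonoid M] where
  prec : M → M → Prop
  trans : ∀ ⦃a b c : M⦄, prec a b → prec b c → prec a c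
  zero_prec : ∀ a : M, prec 0 a
  add_prec : ∀ ⦃a b c d : M⦄, prec a b → prec c d → prec (a + c) (b + d)

namespace PSgp

variable {M : Type*} [AddCommMonoid M]

/-- A path in a `P`-semigroup, indexed by the rationals in `(0,1)`. -/
def IsPath (P : PSgp M) (f : Iq → M) : Prop :=
  ∀ ⦃l m : Iq⦄, l.1 < m.1 → P.prec (f l) (f m)

/-- The type of paths in a `P`-semigroup. -/
def Path (P : PSgp M) : Type _ := {f : Iq → M // P.IsPath f}

variable {P : PSgp M}

instance : Add P.Path :=
  ⟨fun f g => ⟨fun l => f.1 l + g.1 l, fun _ _ h => P.add_prec (f.2 h) (g.2 h)⟩⟩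

instance : Zero P.Path := ⟨⟨fun _ => 0, fun _ _ _ => P.zero_prec 0⟩⟩

lemma path_add_apply (f g : P.Path) (l : Iq) : (f + g).1 l = f.1 l + g.1 l := rfl

/-- The pre-order relation between paths. -/
def pLe (f g : P.Path) : Prop := ∀ l : Iq, ∃ m : Iq, P.prec (f.1 l) (g.1 m)

lemma pLe_refl (f : P.Path) : pLe f f := fun l => by
  obtain ⟨m, hm⟩ := Iq.exists_gt l
  exact ⟨m, f.2 hm⟩

lemma pLe_trans {f g h : P.Path} (h1 : pLe f g) (h2 : pLe g h) : pLe f h := fun l => by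
  obtain ⟨m, hm⟩ := h1 l
  obtain ⟨m', hm'⟩ := h2 m
  exact ⟨m', P.trans hm hm'⟩

lemma pLe_add {f g f' g' : P.Path} (h1 : pLe f f') (h2 : pLe g g') : pLe (f + g) (f' + g') := by
  intro l
  obtain ⟨m1, hm1⟩ := h1 l
  obtain ⟨m2, hm2⟩ := h2 l
  have hmem : 0 < max m1.1 m2.1 ∧ max m1.1 m2.1 < 1 :=
    ⟨lt_max_of_lt_left m1.2.1, max_lt m1.2.2 m2.2.2⟩
  obtain ⟨μ, hμ⟩ := Iq.exists_gt ⟨max m1.1 m2.1, hmem⟩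
  have e1 : m1.1 < μ.1 := lt_of_le_of_lt (le_max_left _ _) hμ
  have e2 : m2.1 < μ.1 := lt_of_le_of_lt (le_max_right _ _) hμ
  exact ⟨μ, P.add_prec (P.trans hm1 (f'.2 e1)) (P.trans hm2 (g'.2 e2))⟩

instance pathSetoid (P : PSgp M) : Setoid P.Path where
  r f g := pLe f g ∧ pLe g f
  iseqv := ⟨fun f => ⟨pLe_refl f, pLe_refl f⟩, fun h => ⟨h.2, h.1⟩,
    fun h1 h2 => ⟨pLe_trans h1.1 h2.1, pLe_trans h2.2 h1.2⟩⟩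

/-- The path construction `τ(S)`: equivalence classes of paths. -/
abbrev Tau (P : PSgp M) : Type _ := Quotient (pathSetoid P)

def addT : Tau P → Tau P → Tau P :=
  Quotient.map₂ (· + ·) fun _ _ hf _ _ hg => ⟨pLe_add hf.1 hg.1, pLe_add hf.2 hg.2⟩

lemma addT_mk (f g : P.Path) : addT ⟦f⟧ ⟦g⟧ = ⟦f + g⟧ := rfl

lemma path_add_assoc (f g h : P.Path) : f + g + h = f + (g + h) :=
  Subtype.ext (funext fun _ => add_assoc _ _ _)

lemma path_add_comm (f g : P.Path) : f + g = g + f :=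
  Subtype.ext (funext fun _ => add_comm _ _)

lemma path_zero_add (f : P.Path) : 0 + f = f :=
  Subtype.ext (funext fun _ => zero_add _)

lemma path_add_zero (f : P.Path) : f + 0 = f :=
  Subtype.ext (funext fun _ => add_zero _)

instance : Zero (Tau P) := ⟨⟦(0 : P.Path)⟧⟩
instance : Add (Tau P) := ⟨addT⟩

instance : AddCommMonoid (Tau P) where
  add := addT
  zero := ⟦(0 : P.Path)⟧
  add_assoc a b c := Quotient.inductionOn₃ a b c fun f g h => by
    show addT (addT ⟦f⟧ ⟦g⟧) ⟦h⟧ = addT ⟦f⟧ (addT ⟦g⟧ ⟦h⟧)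
    rw [addT_mk, addT_mk, addT_mk, addT_mk, path_add_assoc]
  zero_add a := Quotient.inductionOn a fun f => by
    show addT ⟦(0 : P.Path)⟧ ⟦f⟧ = ⟦f⟧
    rw [addT_mk, path_zero_add]
  add_zero a := Quotient.inductionOn a fun f => by
    show addT ⟦f⟧ ⟦(0 : P.Path)⟧ = ⟦f⟧
    rw [addT_mk, path_add_zero]
  add_comm a b := Quotient.inductionOn₂ a b fun f g => by
    show addT ⟦f⟧ ⟦g⟧ = addT ⟦g⟧ ⟦f⟧
    rw [addT_mk, addT_mk, path_add_comm]
  nsmul := nsmulRec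
  nsmul_zero := fun _ => rfl
  nsmul_succ := fun _ _ => rfl

def leT : Tau P → Tau P → Prop :=
  Quotient.lift₂ pLe fun _ _ _ _ hf hg => propext
    ⟨fun h => pLe_trans hf.2 (pLe_trans h hg.1), fun h => pLe_trans hf.1 (pLe_trans h hg.2)⟩

instance : PartialOrder (Tau P) where
  le := leT
  le_refl a := Quotient.inductionOn a pLe_refl
  le_trans a b c := Quotient.inductionOn₃ a b c fun _ _ _ h1 h2 => pLe_trans h1 h2
  le_antisymm a b := Quotient.inductionOn₂ a b fun _ _ h1 h2 => Quotient.sound ⟨h1, h2⟩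

lemma leT_mk (f g : P.Path) : (⟦f⟧ : Tau P) ≤ ⟦g⟧ ↔ pLe f g := Iff.rfl

end PSgp

/-!
Rescaling `f` by rationals `ν_k → 1` exhibits `[f]` as the supremum of an increasing sequence
whose `k`-th term lies below the single value `f(ν_k)`; this gives the forward implication.
Conversely, the supremum of an increasing sequence `[g_k]` is realised by a diagonal path that
runs through the `g_k` on consecutive blocks of `(0,1) ∩ ℚ ≃o ℕ ×ₗ ((0,1) ∩ ℚ)`, so each of its
values is a value of some `g_k`. If every `f'(λ)` precedes `f(μ)` and `f` lies below the diagonal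
path, then `f(μ)` precedes some value of some `g_k`, and hence `f' ≤ g_k`.
-/

namespace Iq

instance : DenselyOrdered Iq := inferInstanceAs (DenselyOrdered (Set.Ioo (0 : ℚ) 1))

instance : NoMinOrder Iq := inferInstanceAs (NoMinOrder (Set.Ioo (0 : ℚ) 1))

instance : NoMaxOrder Iq := inferInstanceAs (NoMaxOrder (Set.Ioo (0 : ℚ) 1))

instance : Nonempty Iq := ⟨⟨1 / 2, by norm_num⟩⟩

lemma nonempty_orderIso_nat_lex : Nonempty (Iq ≃o ℕ ×ₗ Iq) :=
  have : Countable (ℕ ×ₗ Iq) := inferInstanceAs (Countable (ℕ × Iq))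
  Order.iso_of_countable_dense _ _

def mid (x : Iq) : Iq := ⟨(x.1 + 1) / 2, by obtain ⟨h0, h1⟩ := x.2; constructor <;> linarith⟩

lemma lt_mid (x : Iq) : x < mid x := by
  show x.1 < (x.1 + 1) / 2
  linarith [x.2.2]

def squeeze (c t : Iq) : Iq :=
  ⟨c.1 + t.1 * (1 - c.1) / 2, by
    obtain ⟨hc0, hc1⟩ := c.2
    obtain ⟨ht0, ht1⟩ := t.2
    constructor <;> nlinarith⟩

lemma lt_squeeze (c t : Iq) : c < squeeze c t := by
  show c.1 < c.1 + t.1 * (1 - c.1) / 2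
  nlinarith [t.2.1, c.2.2]

lemma squeeze_lt_mid (c t : Iq) : squeeze c t < mid c := by
  show c.1 + t.1 * (1 - c.1) / 2 < (c.1 + 1) / 2
  nlinarith [t.2.2, c.2.2]

lemma squeeze_strictMono (c : Iq) : StrictMono (squeeze c) := fun t t' h => by
  show c.1 + t.1 * (1 - c.1) / 2 < c.1 + t'.1 * (1 - c.1) / 2
  have : t.1 < t'.1 := h
  nlinarith [c.2.2]

def approxOne (k : ℕ) : Iq :=
  ⟨1 - (1 / 2) ^ (k + 1), by constructor <;> norm_num [pow_lt_one₀, pow_pos]⟩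

lemma approxOne_mono : Monotone approxOne := fun k k' h => by
  show 1 - (1 / 2 : ℚ) ^ (k + 1) ≤ 1 - (1 / 2) ^ (k' + 1)
  linarith [pow_le_pow_of_le_one (by norm_num : (0 : ℚ) ≤ 1 / 2) (by norm_num)
    (by omega : k + 1 ≤ k' + 1)]

lemma exists_lt_approxOne {q : ℚ} (hq : q < 1) : ∃ k, q < (approxOne k).1 := by
  obtain ⟨k, hk⟩ := exists_pow_lt_of_lt_one (sub_pos.2 hq) (by norm_num : (1 / 2 : ℚ) < 1)
  refine ⟨k, ?_⟩
  show q < 1 - (1 / 2) ^ (k + 1)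
  linarith [pow_le_pow_of_le_one (by norm_num : (0 : ℚ) ≤ 1 / 2) (by norm_num)
    (by omega : k ≤ k + 1)]

def dominatingSeq (b : ℕ → Iq → Iq) : ℕ → Iq
  | 0 => approxOne 0
  | n + 1 => mid (max (b n (dominatingSeq b n)) (approxOne (n + 1)))

lemma exists_seq_apply_lt_succ (b : ℕ → Iq → Iq) :
    ∃ c : ℕ → Iq, (∀ n, b n (c n) < c (n + 1)) ∧ ∀ (l : Iq) (k : ℕ), ∃ n ≥ k, l < c n := by
  have hstep (n : ℕ) : max (b n (dominatingSeq b n)) (approxOne (n + 1)) <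
      dominatingSeq b (n + 1) := lt_mid _
  have happrox (n : ℕ) : approxOne n ≤ dominatingSeq b n := by
    cases n with
    | zero => exact le_rfl
    | succ n => exact (le_max_right _ _).trans (hstep n).le
  refine ⟨dominatingSeq b, fun n => (le_max_left _ _).trans_lt (hstep n), fun l k => ?_⟩
  obtain ⟨n, hn⟩ := exists_lt_approxOne l.2.2
  exact ⟨max n k, le_max_right _ _,
    (hn.trans_le (approxOne_mono (le_max_left _ _))).trans_le (happrox _)⟩

end Iq

namespace PSgp

variable {M : Type*} [AddCommMonoid M] {P : PSgp M}

def Path.rescale (f : P.Path) (ν : Iq) : P.Path :=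
  ⟨fun l => f.1 ⟨ν.1 * l.1, mul_pos ν.2.1 l.2.1, by nlinarith [ν.2.1, ν.2.2, l.2.1, l.2.2]⟩,
    fun _ _ h => f.2 (mul_lt_mul_of_pos_left h ν.2.1)⟩

lemma Path.prec_rescale_apply (f : P.Path) (ν l : Iq) : P.prec ((f.rescale ν).1 l) (f.1 ν) :=
  f.2 (by show ν.1 * l.1 < ν.1; nlinarith [ν.2.1, l.2.2])

lemma pLe_rescale_self (f : P.Path) (ν : Iq) : pLe (f.rescale ν) f :=
  fun l => ⟨ν, f.prec_rescale_apply ν l⟩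

lemma pLe_rescale_rescale (f : P.Path) {ν ν' : Iq} (h : ν ≤ ν') :
    pLe (f.rescale ν) (f.rescale ν') := fun l =>
  ⟨Iq.mid l,
    f.2 (mul_lt_mul_of_le_of_lt_of_pos_of_nonneg h (Iq.lt_mid l) ν.2.1 (Iq.mid l).2.1.le)⟩

lemma isLUB_rescale_approxOne (f : P.Path) :
    IsLUB (Set.range fun k => (⟦f.rescale (Iq.approxOne k)⟧ : Tau P)) ⟦f⟧ := by
  refine ⟨Set.forall_mem_range.2 fun k => pLe_rescale_self f _, fun t ht => ?_⟩
  induction t using Quotient.inductionOn with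
  | h g =>
  intro l
  have hl : 0 < (Iq.mid l).1 := l.2.1.trans (Iq.lt_mid l)
  obtain ⟨k, hk⟩ := Iq.exists_lt_approxOne ((div_lt_one hl).2 (Iq.lt_mid l))
  obtain ⟨m, hm⟩ := ht (Set.mem_range_self k) (Iq.mid l)
  exact ⟨m, P.trans (f.2 ((div_lt_iff₀ hl).1 hk)) hm⟩

section Glue

variable (g : ℕ → P.Path) (c : ℕ → Iq)

def glue (p : ℕ ×ₗ Iq) : M := (g (ofLex p).1).1 (Iq.squeeze (c (ofLex p).1) (ofLex p).2)

variable {g c}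

lemma prec_of_lt_of_linked
    (hgc : ∀ n x, x < Iq.mid (c n) → P.prec ((g n).1 x) ((g (n + 1)).1 (c (n + 1))))
    {n n' : ℕ} (hn : n < n') {x : Iq} (hx : x < Iq.mid (c n)) :
    P.prec ((g n).1 x) ((g n').1 (c n')) := by
  induction n', hn using Nat.le_induction with
  | base => exact hgc n x hx
  | succ n' _ ih => exact P.trans ih (hgc n' _ (Iq.lt_mid _))

lemma prec_glue_of_lt
    (hgc : ∀ n x, x < Iq.mid (c n) → P.prec ((g n).1 x) ((g (n + 1)).1 (c (n + 1))))
    {p q : ℕ ×ₗ Iq} (h : p < q) : P.prec (glue g c p) (glue g c q) := by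
  obtain ⟨n, t⟩ := ofLex p
  obtain ⟨n', t'⟩ := ofLex q
  rcases Prod.Lex.lt_iff.1 h with hn | ⟨hn, ht⟩
  · exact P.trans (prec_of_lt_of_linked hgc hn (Iq.squeeze_lt_mid _ _))
      ((g _).2 (Iq.lt_squeeze _ _))
  · unfold glue
    rw [← hn]
    exact (g _).2 (Iq.squeeze_strictMono _ ht)

end Glue

lemma exists_upperBound_taking_values_of_seq (g : ℕ → P.Path)
    (hg : ∀ i j, i ≤ j → pLe (g i) (g j)) :
    ∃ H : P.Path, (∀ k, pLe (g k) H) ∧ ∀ m, ∃ k x, H.1 m = (g k).1 x := by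
  obtain ⟨e⟩ := Iq.nonempty_orderIso_nat_lex
  have hT (i j : ℕ) (x : Iq) : ∃ y, i ≤ j → P.prec ((g i).1 x) ((g j).1 y) := by
    by_cases h : i ≤ j
    · exact (hg i j h x).imp fun _ hy _ => hy
    · exact ⟨x, fun h' => absurd h' h⟩
  choose T hT using hT
  -- `c (n + 1)` lies above the images in `g (n + 1)` of `mid (c n)` from all levels `i ≤ n`,
  -- so that the glued path dominates every `g k`.
  obtain ⟨c, hc, hcof⟩ := Iq.exists_seq_apply_lt_succ fun n x =>
    (Finset.range (n + 1)).sup' Finset.nonempty_range_add_one fun i => T i (n + 1) (Iq.mid x)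
  have hstep (i n : ℕ) (hi : i ≤ n) (x : Iq) (hx : x < Iq.mid (c n)) :
      P.prec ((g i).1 x) ((g (n + 1)).1 (c (n + 1))) := by
    have hTc : T i (n + 1) (Iq.mid (c n)) < c (n + 1) :=
      (Finset.le_sup' (fun i => T i (n + 1) (Iq.mid (c n)))
        (Finset.mem_range_succ_iff.2 hi)).trans_lt (hc n)
    exact P.trans ((g i).2 hx) (P.trans (hT i (n + 1) _ (by omega)) ((g (n + 1)).2 hTc))
  refine ⟨⟨fun m => glue g c (e m), fun l m h =>
      prec_glue_of_lt (fun n => hstep n n le_rfl) (e.strictMono h)⟩,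
    fun k l => ?_, fun m => ⟨_, _, rfl⟩⟩
  obtain ⟨n, hkn, hln⟩ := hcof l k
  refine ⟨e.symm (toLex (n + 1, l)), ?_⟩
  show P.prec _ (glue g c (e (e.symm _)))
  rw [e.apply_symm_apply]
  exact P.trans (hstep k n hkn l (hln.trans (Iq.lt_mid _))) ((g _).2 (Iq.lt_squeeze _ _))

end PSgp

/-- Characterization of way-below in `τ(S)`: `[f'] ≪ [f]` iff `f'` is entirely below
some single point `f(μ)` of `f`. -/
theorem stmt9 {M : Type*} [AddCommMonoid M] (P : PSgp M) (f' f : P.Path) :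
    CuWayBelow (⟦f'⟧ : PSgp.Tau P) ⟦f⟧ ↔
      ∃ μ : Iq, ∀ l : Iq, P.prec (f'.1 l) (f.1 μ) := by
  constructor
  · intro h
    obtain ⟨k, hk⟩ := h _ (fun i j hij => PSgp.pLe_rescale_rescale f (Iq.approxOne_mono hij)) _
      (PSgp.isLUB_rescale_approxOne f) le_rfl
    refine ⟨Iq.approxOne k, fun l => ?_⟩
    obtain ⟨m, hm⟩ := hk l
    exact P.trans hm (f.prec_rescale_apply _ m)
  · rintro ⟨μ, hμ⟩ z hz s hs hfs
    have hzk (k : ℕ) : z k = ⟦(z k).out⟧ := (Quotient.out_eq _).symm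
    obtain ⟨H, hgH, hH⟩ := PSgp.exists_upperBound_taking_values_of_seq (fun k => (z k).out)
      fun i j hij => by have := hz hij; rwa [hzk i, hzk j] at this
    have hsH : s ≤ ⟦H⟧ := hs.2 (Set.forall_mem_range.2 fun k => (hzk k).symm ▸ hgH k)
    obtain ⟨m, hm⟩ := (hfs.trans hsH : (⟦f⟧ : PSgp.Tau P) ≤ ⟦H⟧) μ
    obtain ⟨k, x, hx⟩ := hH m
    exact ⟨k, (hzk k).symm ▸ fun l => ⟨x, hx ▸ P.trans (hμ l) hm⟩⟩
end

section
/- Let S be a Cu-semigroup, regarded as a Q-semigroup with auxiliary relation the way-below relation ≪. Then the endpoint map φ_S : τ(S, ≪) → S, sending the class of a path f to sup_λ f(λ), is an order-isomorphism (bijective and both it and its inverse order-preserving). -/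
/-!
A `≪`-path `f` has a supremum, computed along a cofinal sequence by (O1). For paths `f`, `g`
with suprema `a`, `b`, `[f] ≤ [g]` iff `a ≤ b`: if `a ≤ b`, then `f λ ≪ f μ ≤ b` and compact
containment along a cofinal sequence give `f λ ≤ g ν ≪ g ν'`. So the endpoint map is an
order embedding. For surjectivity, (O2) writes `a` as the supremum of a sequence
`z₀ ≪ z₁ ≪ ⋯`; since `≪` interpolates, each gap `zₙ ≪ zₙ₊₁` can be filled, one rational at a
time along an enumeration, by a `≪`-chain indexed by `ℚ ∩ (0,1)`. Concatenating these chains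
gives a chain indexed by `ℕ ×ₗ (ℚ ∩ (0,1))`, which is order isomorphic to `ℚ ∩ (0,1)` by
Cantor's theorem.
-/

namespace Relation

variable {α β : Type*} [LinearOrder β] {r : α → α → Prop}

/-- The values `c i`, `i < n`, placed at the positions `e i`, form an `r`-chain
strictly between `x` and `y`. -/
def IsChainBetween (r : α → α → Prop) (x y : α) (e : ℕ → β) (n : ℕ) (c : ℕ → α) : Prop :=
  (∀ i < n, r x (c i)) ∧ (∀ i < n, r (c i) y) ∧ ∀ i < n, ∀ j < n, e i < e j → r (c i) (c j)

variable {x y : α} {e : ℕ → β} {n : ℕ} {c : ℕ → α}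

lemma IsChainBetween.dual (h : IsChainBetween r x y e n c) :
    IsChainBetween (flip r) y x (OrderDual.toDual ∘ e) n c :=
  ⟨h.2.1, h.1, fun i hi j hj hij => h.2.2 j hj i hi hij⟩

/-- The witness is `x` or the chain element placed highest below `p`. -/
lemma IsChainBetween.exists_lower [IsTrans α r] (he : Function.Injective e)
    (h : IsChainBetween r x y e n c) (p : β) :
    ∃ lo, ∀ b, r lo b ↔ r x b ∧ ∀ i < n, e i < p → r (c i) b := by
  classical
  by_cases hL : ((Finset.range n).filter (e · < p)).Nonempty
  · obtain ⟨i₀, hi₀, hmax⟩ := Finset.exists_max_image _ e hL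
    simp only [Finset.mem_filter, Finset.mem_range] at hi₀ hmax
    refine ⟨c i₀, fun b => ⟨fun hb => ⟨_root_.trans (h.1 i₀ hi₀.1) hb, fun i hi hip => ?_⟩,
      fun hb => hb.2 i₀ hi₀.1 hi₀.2⟩⟩
    rcases (hmax i ⟨hi, hip⟩).eq_or_lt with heq | hlt
    · exact he heq ▸ hb
    · exact _root_.trans (h.2.2 i hi i₀ hi₀.1 hlt) hb
  · simp only [Finset.filter_nonempty_iff, Finset.mem_range, not_exists, not_and] at hL
    exact ⟨x, fun b => ⟨fun hb => ⟨hb, fun i hi hip => absurd hip (hL i hi)⟩, And.left⟩⟩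

lemma IsChainBetween.exists_upper [IsTrans α r] (he : Function.Injective e)
    (h : IsChainBetween r x y e n c) (p : β) :
    ∃ hi, ∀ b, r b hi ↔ r b y ∧ ∀ j < n, p < e j → r b (c j) :=
  have : IsTrans α (flip r) := ⟨fun a b c hab hbc => IsTrans.trans (r := r) c b a hbc hab⟩
  h.dual.exists_lower (r := flip r) (OrderDual.toDual.injective.comp he) (OrderDual.toDual p)

lemma IsChainBetween.exists_update [IsTrans α r] (interp : ∀ a b, r a b → ∃ w, r a w ∧ r w b)
    (he : Function.Injective e) (hxy : r x y) (h : IsChainBetween r x y e n c) :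
    ∃ w, IsChainBetween r x y e (n + 1) (Function.update c n w) := by
  obtain ⟨lo, hlo⟩ := h.exists_lower he (e n)
  obtain ⟨hi, hhi⟩ := h.exists_upper he (e n)
  have hlohi : r lo hi := (hlo hi).2
    ⟨(hhi x).2 ⟨hxy, fun j hj _ => h.1 j hj⟩, fun i hi hin => (hhi (c i)).2
      ⟨h.2.1 i hi, fun j hj hnj => h.2.2 i hi j hj (hin.trans hnj)⟩⟩
  obtain ⟨w, hlow, hwhi⟩ := interp lo hi hlohi
  obtain ⟨hxw, hcw⟩ := (hlo w).1 hlow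
  obtain ⟨hwy, hwc⟩ := (hhi w).1 hwhi
  have hval : ∀ i < n + 1, Function.update c n w i = if i = n then w else c i :=
    fun i _ => Function.update_apply c n w i
  refine ⟨w, fun i hi => ?_, fun i hi => ?_, fun i hi j hj hij => ?_⟩
  · rw [hval i hi]; split_ifs with hin
    exacts [hxw, h.1 i (by omega)]
  · rw [hval i hi]; split_ifs with hin
    exacts [hwy, h.2.1 i (by omega)]
  · rw [hval i hi, hval j hj]
    split_ifs with hin hjn hjn
    · exact absurd (hin ▸ hjn ▸ hij) (lt_irrefl _)
    · exact hwc j (by omega) (hin ▸ hij)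
    · exact hcw i (by omega) (hjn ▸ hij)
    · exact h.2.2 i (by omega) j (by omega) hij

theorem exists_chain_between [Countable β] [Infinite β] [IsTrans α r]
    (interp : ∀ a b, r a b → ∃ w, r a w ∧ r w b) (hxy : r x y) :
    ∃ c : β → α, (∀ ⦃i j⦄, i < j → r (c i) (c j)) ∧ ∀ i, r x (c i) ∧ r (c i) y := by
  classical
  have : Nonempty α := ⟨x⟩
  obtain ⟨_⟩ := nonempty_denumerable β
  let e : ℕ ≃ β := (Denumerable.eqv β).symm
  choose! next hnext using fun n (c : ℕ → α) =>
    IsChainBetween.exists_update (e := e) (n := n) (c := c) interp e.injective hxy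
  let stage : ℕ → ℕ → α := fun n =>
    Nat.rec (fun _ => x) (fun n c => Function.update c n (next n c)) n
  have hstage : ∀ n, IsChainBetween r x y e n (stage n) := fun n => by
    induction n with
    | zero => simp [IsChainBetween]
    | succ n ih => exact hnext n _ ih
  have hstable : ∀ i n, i < n → stage n i = stage (i + 1) i := fun i n hin => by
    induction n with
    | zero => omega
    | succ n ih =>
      rcases Nat.lt_succ_iff_lt_or_eq.1 hin with hlt | rfl
      · exact (Function.update_of_ne (by omega) _ _).trans (ih hlt)
      · rfl
  let d : ℕ → α := fun i => stage (i + 1) i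
  have hd : ∀ n, IsChainBetween r x y e n d := fun n => by
    have hdn : ∀ i < n, d i = stage n i := fun i hi => (hstable i n hi).symm
    obtain ⟨h₁, h₂, h₃⟩ := hstage n
    exact ⟨fun i hi => hdn i hi ▸ h₁ i hi, fun i hi => hdn i hi ▸ h₂ i hi,
      fun i hi j hj hij => hdn i hi ▸ hdn j hj ▸ h₃ i hi j hj hij⟩
  refine ⟨d ∘ e.symm, fun i j hij => ?_, fun i => ?_⟩
  · have hij' : e (e.symm i) < e (e.symm j) := by simpa using hij
    exact (hd (e.symm i + e.symm j + 1)).2.2 _ (by omega) _ (by omega) hij'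
  · exact ⟨(hd (e.symm i + 1)).1 _ (by omega), (hd (e.symm i + 1)).2.1 _ (by omega)⟩

end Relation

instance : DenselyOrdered Iq := inferInstanceAs (DenselyOrdered (Set.Ioo (0 : ℚ) 1))
instance : NoMinOrder Iq := inferInstanceAs (NoMinOrder (Set.Ioo (0 : ℚ) 1))
instance : NoMaxOrder Iq := inferInstanceAs (NoMaxOrder (Set.Ioo (0 : ℚ) 1))
instance : Nonempty Iq := ⟨⟨1 / 2, by norm_num⟩⟩
instance : Countable (ℕ ×ₗ Iq) := inferInstanceAs (Countable (ℕ × Iq))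

namespace CuWayBelow

variable {S : Type*} [Preorder S] {x x' y y' : S}

theorem le_s13 (h : CuWayBelow x y) : x ≤ y := by
  simpa using h (fun _ => y) monotone_const y (by simp [isLUB_singleton]) le_rfl

theorem mono_left (hx : x' ≤ x) (h : CuWayBelow x y) : CuWayBelow x' y := fun z hz s hs hys =>
  (h z hz s hs hys).imp fun _ => hx.trans

theorem mono_right (h : CuWayBelow x y) (hy : y ≤ y') : CuWayBelow x y' := fun z hz s hs hys =>
  h z hz s hs (hy.trans hys)

instance : IsTrans S CuWayBelow := ⟨fun _ _ _ hxy hyz => hyz.mono_left hxy.le_s13⟩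

theorem monotone_of_lt {β : Type*} [LinearOrder β] {f : β → S}
    (hf : ∀ ⦃i j⦄, i < j → CuWayBelow (f i) (f j)) : Monotone f := fun _ _ hij =>
  hij.eq_or_lt.elim (fun h => h ▸ le_rfl) fun h => (hf h).le_s13

end CuWayBelow

theorem upperBounds_range_comp_of_cofinal {S β ι : Type*} [Preorder S] [Preorder β] {f : β → S}
    (hf : Monotone f) {s : ι → β} (hs : ∀ b, ∃ i, b ≤ s i) :
    upperBounds (Set.range (f ∘ s)) = upperBounds (Set.range f) := by
  refine subset_antisymm (fun a ha => ?_) (upperBounds_mono_set (Set.range_comp_subset_range s f))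
  rintro _ ⟨b, rfl⟩
  obtain ⟨i, hi⟩ := hs b
  exact (hf hi).trans (ha ⟨i, rfl⟩)

section Directed

variable {S β : Type*} [Preorder β] [IsDirectedOrder β] [Nonempty β] [Countable β]

theorem exists_monotone_cofinal_seq : ∃ s : ℕ → β, Monotone s ∧ ∀ b, ∃ n, b ≤ s n := by
  obtain ⟨s, hs, hlim⟩ := Filter.exists_seq_monotone_tendsto_atTop_atTop β
  exact ⟨s, hs, fun b => (Filter.tendsto_atTop_atTop.1 hlim b).imp fun n hn => hn n le_rfl⟩

theorem CuWayBelow.exists_le_of_isLUB [Preorder S] {x y a : S} {f : β → S} (hf : Monotone f)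
    (ha : IsLUB (Set.range f) a) (h : CuWayBelow x y) (hya : y ≤ a) : ∃ b, x ≤ f b := by
  obtain ⟨s, hs, hcof⟩ := exists_monotone_cofinal_seq (β := β)
  have has : IsLUB (Set.range (f ∘ s)) a := by
    rwa [IsLUB, upperBounds_range_comp_of_cofinal hf hcof]
  obtain ⟨n, hn⟩ := h (f ∘ s) (hf.comp hs) a has hya
  exact ⟨s n, hn⟩

theorem IsCuSgp.exists_isLUB [AddCommMonoid S] [PartialOrder S] [IsCuSgp S] {f : β → S}
    (hf : Monotone f) : ∃ a, IsLUB (Set.range f) a := by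
  obtain ⟨s, hs, hcof⟩ := exists_monotone_cofinal_seq (β := β)
  obtain ⟨a, ha⟩ := IsCuSgp.O1 (f ∘ s) (hf.comp hs)
  rw [IsLUB, upperBounds_range_comp_of_cofinal hf hcof] at ha
  exact ⟨a, ha⟩

end Directed

section CuSgp

variable {S : Type*} [AddCommMonoid S] [PartialOrder S] [IsCuSgp S]

theorem CuWayBelow.exists_between {x y : S} (h : CuWayBelow x y) :
    ∃ w, CuWayBelow x w ∧ CuWayBelow w y := by
  obtain ⟨z, hz, hlub⟩ := IsCuSgp.O2 y
  obtain ⟨k, hk⟩ := h z (monotone_nat_of_le_succ fun n => (hz n).le_s13) y hlub le_rfl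
  exact ⟨z (k + 1), (hz k).mono_left hk, (hz (k + 1)).mono_right (hlub.1 (Set.mem_range_self _))⟩

theorem IsCuSgp.exists_path_isLUB (a : S) : ∃ f : Iq → S,
    (∀ ⦃l m : Iq⦄, l < m → CuWayBelow (f l) (f m)) ∧ IsLUB (Set.range f) a := by
  obtain ⟨z, hz, hlub⟩ := IsCuSgp.O2 a
  have hzmono : Monotone z := monotone_nat_of_le_succ fun n => (hz n).le_s13
  choose c hc hbetween using fun n =>
    Relation.exists_chain_between (β := Iq) (fun _ _ h => CuWayBelow.exists_between h) (hz n)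
  obtain ⟨φ⟩ := Order.iso_of_countable_dense Iq (ℕ ×ₗ Iq)
  let g : ℕ ×ₗ Iq → S := fun p => c (ofLex p).1 (ofLex p).2
  have hg : ∀ ⦃p q : ℕ ×ₗ Iq⦄, p < q → CuWayBelow (g p) (g q) := fun p q hpq => by
    rcases Prod.Lex.lt_iff.1 hpq with hlt | ⟨heq, hlt⟩
    · exact _root_.trans ((hbetween _ _).2.mono_right (hzmono (Nat.succ_le_of_lt hlt)))
        (hbetween _ _).1
    · simp only [g, heq]
      exact hc _ hlt
  refine ⟨g ∘ φ, fun l m hlm => hg (φ.strictMono hlm), ?_⟩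
  rw [EquivLike.range_comp]
  obtain ⟨l₀⟩ := (inferInstance : Nonempty Iq)
  refine ⟨?_, fun b hb => hlub.2 ?_⟩
  · rintro _ ⟨p, rfl⟩
    exact (hbetween _ _).2.le_s13.trans (hlub.1 (Set.mem_range_self _))
  · rintro _ ⟨n, rfl⟩
    exact (hbetween n l₀).1.le_s13.trans (hb ⟨toLex (n, l₀), rfl⟩)

end CuSgp

namespace PSgp

section Preorder

variable {S : Type*} [AddCommMonoid S] [Preorder S] {P : PSgp S}

theorem Path.cuWayBelow (hP : ∀ a b : S, P.prec a b ↔ CuWayBelow a b) (f : P.Path) ⦃l m : Iq⦄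
    (hlm : l < m) : CuWayBelow (f.1 l) (f.1 m) :=
  (hP _ _).1 (f.2 hlm)

theorem pLe_iff_le_of_isLUB (hP : ∀ a b : S, P.prec a b ↔ CuWayBelow a b) {f g : P.Path}
    {a b : S} (ha : IsLUB (Set.range f.1) a) (hb : IsLUB (Set.range g.1) b) :
    pLe f g ↔ a ≤ b := by
  refine ⟨fun hfg => ha.2 ?_, fun hab l => ?_⟩
  · rintro _ ⟨l, rfl⟩
    obtain ⟨m, hm⟩ := hfg l
    exact ((hP _ _).1 hm).le_s13.trans (hb.1 (Set.mem_range_self m))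
  · obtain ⟨m, hlm⟩ := exists_gt l
    obtain ⟨k, hk⟩ := CuWayBelow.exists_le_of_isLUB
      (CuWayBelow.monotone_of_lt (Path.cuWayBelow hP g)) hb (Path.cuWayBelow hP f hlm)
      ((ha.1 (Set.mem_range_self m)).trans hab)
    obtain ⟨m', hkm'⟩ := exists_gt k
    exact ⟨m', (hP _ _).2 ((Path.cuWayBelow hP g hkm').mono_left hk)⟩

end Preorder

theorem exists_orderIso_of_pLe_iff {S : Type*} [AddCommMonoid S] [PartialOrder S] {P : PSgp S}
    (E : P.Path → S) (hE : ∀ f g, pLe f g ↔ E f ≤ E g) (hsurj : Function.Surjective E) :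
    ∃ e : Tau P ≃o S, ∀ f, e ⟦f⟧ = E f := by
  let E' : Tau P → S := Quotient.lift E fun f g hfg =>
    le_antisymm ((hE f g).1 hfg.1) ((hE g f).1 hfg.2)
  let emb : Tau P ↪o S := OrderEmbedding.ofMapLEIff E' fun a b =>
    Quotient.inductionOn₂ a b fun f g => (hE f g).symm
  exact ⟨OrderIso.ofSurjective emb fun a => (hsurj a).elim fun f hf => ⟨⟦f⟧, hf⟩, fun _ => rfl⟩

end PSgp

/-- For a Cu-semigroup `S` regarded as a `Q`-semigroup with auxiliary relation `≪`,
the endpoint map `τ(S, ≪) → S` is an order-isomorphism. -/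
theorem stmt13 {S : Type*} [AddCommMonoid S] [PartialOrder S] [IsCuSgp S]
    (P : PSgp S) (hP : ∀ a b : S, P.prec a b ↔ CuWayBelow a b) :
    ∃ e : PSgp.Tau P ≃o S, ∀ f : P.Path, IsLUB (Set.range f.1) (e ⟦f⟧) := by
  choose E hE using fun f : P.Path =>
    IsCuSgp.exists_isLUB (CuWayBelow.monotone_of_lt (PSgp.Path.cuWayBelow hP f))
  have hsurj : Function.Surjective E := fun a => by
    obtain ⟨f, hf, ha⟩ := IsCuSgp.exists_path_isLUB a
    exact ⟨⟨f, fun l m hlm => (hP _ _).2 (hf hlm)⟩, (hE _).unique ha⟩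
  obtain ⟨e, he⟩ := PSgp.exists_orderIso_of_pLe_iff E
    (fun f g => PSgp.pLe_iff_le_of_isLUB hP (hE f) (hE g)) hsurj
  exact ⟨e, fun f => he f ▸ hE f⟩
end
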